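/- With N(p,q) defined via the Bredon–Wood continued-fraction recipe, N(p,q) ≡ p/2 (mod 2) for all nonzero coprime integers p, q with p even. -/

import Mathlib

/-!
Write `x / y` for the reduced value of a continued fraction whose entries after the first are
positive. Peeling off the first entry `a` gives `x = a * x' + y'` and `y = x'`, where `x' / y'` is
the value of the tail. Running the Bredon–Wood recursion along the list, one checks by induction
that the sum it produces is congruent mod 4 to `s + x`, `s + y` or `s + x + y - 1` (with `s` the
running sum), according to the parity of `s` and the flag; the only arithmetic input is that
`(u - 1) * (v - 1) ≡ 0 (mod 4)` for odd `u, v`, together with `x` and `y` not both being even.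
Starting from `s = 0` gives `∑ bᵢ ≡ |p| (mod 4)`.
-/

/-- The value of the continued fraction `[a₀, a₁, …, aₙ] = a₀ + 1/(a₁ + 1/(⋯ + 1/aₙ))`. -/
def cfVal : List ℕ → ℚ
  | [] => 0
  | [a] => (a : ℚ)
  | a :: l => (a : ℚ) + 1 / cfVal l

/-- Bredon–Wood sum: given the list `[a₀, …, aₙ]`, a running sum `s` of the `bⱼ` so far, and a
flag recording whether the previous `b` equalled the previous `a`, compute `b₀ + ⋯ + bₙ`,
where `b₀ = a₀` and, for `i ≥ 1`, `bᵢ = 0` if `b_{i-1} = a_{i-1}` and `b₀ + ⋯ + b_{i-1}` is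
even, and `bᵢ = aᵢ` otherwise. -/
def bwAux : List ℕ → ℕ → Bool → ℕ
  | [], s, _ => s
  | a :: l, s, full =>
    let b := if full = true ∧ Even s then 0 else a
    bwAux l (s + b) (decide (b = a))

lemma bwAux_cons_false (a : ℕ) (l : List ℕ) (s : ℕ) :
    bwAux (a :: l) s false = bwAux l (s + a) true := by
  simp [bwAux]

lemma bwAux_cons_true_of_even {a : ℕ} (l : List ℕ) {s : ℕ} (ha : a ≠ 0) (hs : s % 2 = 0) :
    bwAux (a :: l) s true = bwAux l s false := by
  simp [bwAux, Nat.even_iff.mpr hs, Ne.symm ha]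

lemma bwAux_cons_of_odd (a : ℕ) (l : List ℕ) {s : ℕ} (full : Bool) (hs : s % 2 = 1) :
    bwAux (a :: l) s full = bwAux l (s + a) true := by
  simp [bwAux, Nat.even_iff, hs]

/-- The value of `l` in lowest terms, as a numerator–denominator pair. The empty list stands for
`1 / 0` (whereas `cfVal [] = 0`), which makes the recursion uniform. -/
def cfFrac (l : List ℕ) : ℕ × ℕ := l.foldr (fun a nd => (a * nd.1 + nd.2, nd.1)) (1, 0)

def cfNum (l : List ℕ) : ℕ := (cfFrac l).1

def cfDen (l : List ℕ) : ℕ := (cfFrac l).2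

@[simp] lemma cfNum_nil : cfNum [] = 1 := rfl

@[simp] lemma cfDen_nil : cfDen [] = 0 := rfl

@[simp] lemma cfNum_cons (a : ℕ) (l : List ℕ) : cfNum (a :: l) = a * cfNum l + cfDen l := rfl

@[simp] lemma cfDen_cons (a : ℕ) (l : List ℕ) : cfDen (a :: l) = cfNum l := rfl

lemma cfNum_pos {l : List ℕ} (hl : ∀ a ∈ l, 0 < a) : 0 < cfNum l := by
  induction l with
  | nil => simp
  | cons a l ih =>
    simp only [List.mem_cons, forall_eq_or_imp] at hl
    simp only [cfNum_cons]
    have := Nat.mul_pos hl.1 (ih hl.2)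
    omega

lemma cfNum_coprime_cfDen (l : List ℕ) : Nat.Coprime (cfNum l) (cfDen l) := by
  induction l with
  | nil => simp
  | cons a l ih =>
    rw [cfNum_cons, cfDen_cons, add_comm, Nat.coprime_add_mul_right_left]
    exact ih.symm

lemma cfVal_cons {l : List ℕ} (a : ℕ) (hl : ∀ b ∈ l, 0 < b) :
    cfVal (a :: l) = cfNum (a :: l) / cfDen (a :: l) := by
  induction l generalizing a with
  | nil => simp [cfVal]
  | cons b m ih =>
    simp only [List.mem_cons, forall_eq_or_imp] at hl
    have hnum : (cfNum (b :: m) : ℚ) ≠ 0 := by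
      exact_mod_cast (cfNum_pos (l := b :: m) (by simpa using hl)).ne'
    rw [show cfVal (a :: b :: m) = a + 1 / cfVal (b :: m) from rfl, ih b hl.2,
      cfNum_cons a, cfDen_cons a]
    push_cast
    field_simp

lemma Nat.Coprime.mod_two_eq_one_or {m n : ℕ} (h : Nat.Coprime m n) :
    m % 2 = 1 ∨ n % 2 = 1 := by
  by_contra! hmn
  have h2 : 2 ∣ Nat.gcd m n := Nat.dvd_gcd (by omega) (by omega)
  rw [h] at h2
  omega

lemma Nat.mul_mod_two_eq_zero_iff (a n : ℕ) : a * n % 2 = 0 ↔ a % 2 = 0 ∨ n % 2 = 0 := by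
  simpa only [Nat.even_iff] using Nat.even_mul (m := a) (n := n)

lemma mul_mod_four_of_even_of_odd {a n : ℕ} (ha : a % 2 = 0) (hn : n % 2 = 1) :
    a * n % 4 = a % 4 := by
  obtain ⟨i, rfl⟩ : ∃ i, a = 2 * i := ⟨a / 2, by omega⟩
  obtain ⟨j, rfl⟩ : ∃ j, n = 2 * j + 1 := ⟨n / 2, by omega⟩
  ring_nf
  omega

lemma mul_add_one_mod_four_of_odd {a n : ℕ} (ha : a % 2 = 1) (hn : n % 2 = 1) :
    (a * n + 1) % 4 = (a + n) % 4 := by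
  obtain ⟨i, rfl⟩ : ∃ i, a = 2 * i + 1 := ⟨a / 2, by omega⟩
  obtain ⟨j, rfl⟩ : ∃ j, n = 2 * j + 1 := ⟨n / 2, by omega⟩
  ring_nf
  omega

def BwCongr (l : List ℕ) : Prop :=
  ∀ s, (s % 2 = 0 → cfNum l % 2 = 0 → bwAux l s false % 4 = (s + cfNum l) % 4) ∧
    (s % 2 = 0 → cfDen l % 2 = 0 → bwAux l s true % 4 = (s + cfDen l) % 4) ∧
    ∀ full, (s % 2 = 1 → cfNum l % 2 = 1 → cfDen l % 2 = 1 →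
      (bwAux l s full + 1) % 4 = (s + cfNum l + cfDen l) % 4)

lemma bwCongr_nil : BwCongr [] := by
  intro s
  simp [bwAux]

lemma BwCongr.cons_false {l : List ℕ} (h : BwCongr l) (a : ℕ) {s : ℕ} (hs : s % 2 = 0)
    (hx : cfNum (a :: l) % 2 = 0) :
    bwAux (a :: l) s false % 4 = (s + cfNum (a :: l)) % 4 := by
  rw [bwAux_cons_false]
  rw [cfNum_cons] at hx ⊢
  obtain ⟨-, hB, hC⟩ := h (s + a)
  have hodd := (cfNum_coprime_cfDen l).mod_two_eq_one_or
  have hpar := Nat.mul_mod_two_eq_zero_iff a (cfNum l)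
  have hmod := @mul_mod_four_of_even_of_odd a (cfNum l)
  have hmod' := @mul_add_one_mod_four_of_odd a (cfNum l)
  specialize hC true
  omega

lemma BwCongr.cons {l : List ℕ} (h : BwCongr l) {a : ℕ} (ha : 0 < a) : BwCongr (a :: l) := by
  intro s
  refine ⟨h.cons_false a, fun hs hy => ?_, fun full hs hx hy => ?_⟩
  · rw [bwAux_cons_true_of_even l ha.ne' hs]
    exact (h s).1 hs hy
  · rw [bwAux_cons_of_odd a l full hs]
    simp only [cfNum_cons, cfDen_cons] at hx hy ⊢
    obtain ⟨-, hB, hC⟩ := h (s + a)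
    have hpar := Nat.mul_mod_two_eq_zero_iff a (cfNum l)
    have hmod := @mul_mod_four_of_even_of_odd a (cfNum l)
    have hmod' := @mul_add_one_mod_four_of_odd a (cfNum l)
    specialize hC true
    omega

lemma bwCongr_of_forall_pos {l : List ℕ} (hl : ∀ a ∈ l, 0 < a) : BwCongr l := by
  induction l with
  | nil => exact bwCongr_nil
  | cons a l ih =>
    simp only [List.mem_cons, forall_eq_or_imp] at hl
    exact (ih hl.2).cons hl.1

lemma forall_mem_pos_of_getD {a : ℕ} {l : List ℕ}
    (hmid : ∀ i : ℕ, 0 < i → i + 1 < (a :: l).length → 0 < (a :: l).getD i 0)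
    (hlast : 2 ≤ (a :: l).length → 1 < (a :: l).getD ((a :: l).length - 1) 0) :
    ∀ b ∈ l, 0 < b := by
  intro b hb
  obtain ⟨i, hi, rfl⟩ := List.getElem_of_mem hb
  have hget : (a :: l).getD (i + 1) 0 = l[i] := by simp [hi]
  by_cases hil : i + 1 < l.length
  · exact hget ▸ hmid (i + 1) (by omega) (by simpa using hil)
  · have hlen : (a :: l).length - 1 = i + 1 := by simp only [List.length_cons]; omega
    have := hlast (by simp only [List.length_cons]; omega)
    rw [hlen, hget] at this
    omega

theorem stmt10_general (p q : ℤ) (hq : q ≠ 0) (hcop : IsCoprime p q)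
    (hpe : p % 2 = 0) (L : List ℕ) (hL : L ≠ [])
    (hmid : ∀ i : ℕ, 0 < i → i + 1 < L.length → 0 < L.getD i 0)
    (hlast : 2 ≤ L.length → 1 < L.getD (L.length - 1) 0)
    (hval : cfVal L = (p.natAbs : ℚ) / (q.natAbs : ℚ)) :
    ((bwAux L 0 false : ℤ) / 2) % 2 = (p / 2) % 2 := by
  obtain ⟨a, l, rfl⟩ := List.exists_cons_of_ne_nil hL
  have hl := forall_mem_pos_of_getD hmid hlast
  have hnum : cfNum (a :: l) = p.natAbs := by
    rw [cfVal_cons a hl] at hval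
    have := Rat.div_int_inj (a := cfNum (a :: l)) (b := cfDen (a :: l)) (c := p.natAbs)
      (d := q.natAbs) (by simpa using cfNum_pos hl) (by simpa using hq)
      (by simpa only [Int.natAbs_natCast] using cfNum_coprime_cfDen (a :: l))
      (by rw [Int.natAbs_natCast, Int.natAbs_natCast]; exact Int.isCoprime_iff_gcd_eq_one.mp hcop)
      (by simpa only [Int.cast_natCast] using hval)
    exact_mod_cast this.1
  have hsum := (bwCongr_of_forall_pos hl).cons_false a (s := 0) rfl (by omega)
  rw [hnum, zero_add] at hsum
  omega

/-- For nonzero coprime integers `p, q` with `p` even, write `|p|/|q| = [a₀, …, aₙ]` as a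
continued fraction with `a₀ ≥ 0`, `a₁, …, a_{n-1} > 0`, `aₙ > 1`. Then the Bredon–Wood sum
`N(p,q) = (b₀ + ⋯ + bₙ)/2` satisfies `N(p,q) ≡ p/2 (mod 2)`. -/
theorem stmt10 (p q : ℤ) (hp : p ≠ 0) (hq : q ≠ 0) (hcop : IsCoprime p q)
    (hpe : p % 2 = 0) (L : List ℕ) (hL : L ≠ [])
    (hmid : ∀ i : ℕ, 0 < i → i + 1 < L.length → 0 < L.getD i 0)
    (hlast : 2 ≤ L.length → 1 < L.getD (L.length - 1) 0)
    (hval : cfVal L = (p.natAbs : ℚ) / (q.natAbs : ℚ)) :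
    ((bwAux L 0 false : ℤ) / 2) % 2 = (p / 2) % 2 :=
  stmt10_general p q hq hcop hpe L hL hmid hlast hval
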